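/- For any k ∈ Z and homogeneous x ∈ Â[k]_α, y ∈ Â[k+1]_β, the q-commutator [x,y]_q = xy − q^{−(α,β)} yx lies in the sum Σ Â[k+1]_{β'} Â[k]_{α'} over pairs (α',β') with ‖α'‖ < ‖α‖ and ‖β'‖ < ‖β‖, where for γ = Σ_i a_i α_i one sets ‖γ‖ = Σ_i |a_i| α_i, and γ' < γ means γ − γ' is a nonzero sum of simple roots with nonnegative coefficients. -/

import Mathlib

/- Common setting: a symmetrizable generalized Cartan matrix, the field
`𝕂 = ℚ(q^{1/2})` (with `sqv = q^{1/2}` and `q = qh = sqv²`), quantum integers, the bosonic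
extension `hA A` presented by the `q`-Serre relations and the bosonic commutation
relations, its weight spaces and distinguished subalgebras, and the root-lattice
pairing. -/

set_option maxHeartbeats 1000000
set_option synthInstance.maxHeartbeats 400000

noncomputable section

structure GCM (I : Type) where
  c : I → I → ℤ
  d : I → ℤ
  d_pos : ∀ i, 0 < d i
  diag : ∀ i, c i i = 2
  offdiag : ∀ i j, i ≠ j → c i j ≤ 0
  dsymm : ∀ i j, d i * c i j = d j * c j i

abbrev 𝕂 : Type := RatFunc ℚ

/-- The square root `q^{1/2}` of `q`. -/
def sqv : 𝕂 := RatFunc.X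

/-- The indeterminate `q = (q^{1/2})²`. -/
def qh : 𝕂 := sqv ^ 2

def qNum (t : 𝕂) (n : ℕ) : 𝕂 := (t ^ n - t⁻¹ ^ n) / (t - t⁻¹)

def qFact (t : 𝕂) (n : ℕ) : 𝕂 := ∏ k ∈ Finset.range n, qNum t (k + 1)

def qBinom (t : 𝕂) (m k : ℕ) : 𝕂 := qFact t m / (qFact t k * qFact t (m - k))

variable {I : Type} [DecidableEq I]

/-- `q_i = q^{d_i}`. -/
def qd (A : GCM I) (i : I) : 𝕂 := qh ^ A.d i

/-- `ζ_i = 1 - q_i²`. -/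
def zi (A : GCM I) (i : I) : 𝕂 := 1 - qd A i ^ 2

/-- The `q`-Serre element `Σ_{k=0}^{b_{ij}} (-1)^k [b_{ij} choose k]_{q_i} a^k b a^{b_{ij}-k}`
for elements `a, b` of any `𝕂`-algebra, where `b_{ij} = 1 - c_{ij}`. -/
def serreIn {R : Type} [Ring R] [Algebra 𝕂 R] (A : GCM I) (i j : I) (a b : R) : R :=
  ∑ k ∈ Finset.range ((1 - A.c i j).toNat + 1),
    ((-1 : 𝕂) ^ k * qBinom (qd A i) ((1 - A.c i j).toNat) k) •
      (a ^ k * b * a ^ ((1 - A.c i j).toNat - k))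

/-- The defining relations of the bosonic extension: (a) for each `p`, the `q`-Serre
relations among the `f_{i,p}`; (b) for `m < p`,
`f_{i,m} f_{j,p} = q^{(-1)^{p-m+1}(α_i,α_j)} f_{j,p} f_{i,m} + δ_{(j,p),(i,m+1)}(1-q_i²)`. -/
inductive hARel (A : GCM I) : FreeAlgebra 𝕂 (I × ℤ) → FreeAlgebra 𝕂 (I × ℤ) → Prop
  | serre (i j : I) (p : ℤ) (h : i ≠ j) :
      hARel A (serreIn A i j (FreeAlgebra.ι 𝕂 (i, p)) (FreeAlgebra.ι 𝕂 (j, p))) 0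
  | comm (i j : I) (m p : ℤ) (h : m < p) :
      hARel A (FreeAlgebra.ι 𝕂 (i, m) * FreeAlgebra.ι 𝕂 (j, p))
        (qh ^ (((p - m + 1).negOnePow : ℤ) * (A.d i * A.c i j)) •
            (FreeAlgebra.ι 𝕂 (j, p) * FreeAlgebra.ι 𝕂 (i, m))
          + if j = i ∧ p = m + 1 then ((1 : 𝕂) - qd A i ^ 2) • 1 else 0)

/-- The bosonic extension `Â` associated with the generalized Cartan matrix. -/
abbrev hA (A : GCM I) : Type := RingQuot (hARel A)

/-- The generator `f_{i,p}` of the bosonic extension. -/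
def ff (A : GCM I) (i : I) (p : ℤ) : hA A :=
  RingQuot.mkAlgHom 𝕂 (hARel A) (FreeAlgebra.ι 𝕂 (i, p))

/-- The symmetric bilinear pairing on the root lattice, `(α_i, α_j) = d_i c_{ij}`. -/
def ip (A : GCM I) (β γ : I →₀ ℤ) : ℤ :=
  β.sum fun i a => γ.sum fun j b => a * b * (A.d i * A.c i j)

/-- `α_{i,m} = (-1)^m α_i` as an element of the root lattice. -/
def aim (i : I) (m : ℤ) : I →₀ ℤ := Finsupp.single i ((m.negOnePow : ℤ))

/-- The weight space of weight `β` of `Â`, where `wt (f_{i,p}) = (-1)^{p+1} α_i`. -/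
def hAwt (A : GCM I) (β : I →₀ ℤ) : Submodule 𝕂 (hA A) :=
  Submodule.span 𝕂 {x | ∃ l : List (I × ℤ),
    (l.map fun p => Finsupp.single p.1 (((p.2 + 1).negOnePow : ℤ))).sum = β ∧
    x = (l.map fun p => ff A p.1 p.2).prod}

/-- The subalgebra `Â[a,b]` generated by `{f_{i,k} | a ≤ k ≤ b}`. -/
def hAband (A : GCM I) (a b : ℤ) : Subalgebra 𝕂 (hA A) :=
  Algebra.adjoin 𝕂 {x | ∃ i k, a ≤ k ∧ k ≤ b ∧ x = ff A i k}

/-- The subalgebra `Â[m]`. -/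
def hAk (A : GCM I) (m : ℤ) : Subalgebra 𝕂 (hA A) := hAband A m m

/-- The subalgebra `Â_{≥ m}`. -/
def hAge (A : GCM I) (m : ℤ) : Subalgebra 𝕂 (hA A) :=
  Algebra.adjoin 𝕂 {x | ∃ i k, m ≤ k ∧ x = ff A i k}

/-- The subalgebra `Â_{≤ m}`. -/
def hAle (A : GCM I) (m : ℤ) : Subalgebra 𝕂 (hA A) :=
  Algebra.adjoin 𝕂 {x | ∃ i k, k ≤ m ∧ x = ff A i k}

/-- The subalgebra `Â_{> m}`. -/
def hAgt (A : GCM I) (m : ℤ) : Subalgebra 𝕂 (hA A) := hAge A (m + 1)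

/-- The subalgebra `Â_{< m}`. -/
def hAlt (A : GCM I) (m : ℤ) : Subalgebra 𝕂 (hA A) := hAle A (m - 1)

/-- `‖γ‖ = Σ_i |a_i| α_i` for `γ = Σ_i a_i α_i`. -/
def nrm (γ : I →₀ ℤ) : I →₀ ℤ := γ.mapRange (fun n => |n|) (by simp)

/-- `γ' < γ`: `γ - γ'` is a nonzero sum of simple roots with nonnegative coefficients. -/
def qlt (γ' γ : I →₀ ℤ) : Prop := γ' ≠ γ ∧ ∀ i, γ' i ≤ γ i

/-
The weights `wt f_{i,p} = (-1)^{p+1} α_i` make `Â` a root-lattice graded algebra: `f_{i,p} ↦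
f_{i,p} ⊗ e^{wt f_{i,p}}` respects the defining relations and so gives an algebra map
`Â → Â[Q]`. Reading off its weight-`α` coefficient shows that a weight-`α` element of `Â[k]` is
a combination of level-`k` monomials `f_{i₁,k} ⋯ f_{iₙ,k}` of weight `α`. All letters of such a
monomial have the same sign, so `‖α‖ = α_{i₁} + ⋯ + α_{iₙ}` just counts its letters, and by
bilinearity it suffices to treat two monomials. Between consecutive levels the relations read
`[f_{i,k}, f_{j,k+1}]_q = δ_{ij}(1 - q_i²)`, so the `q`-Leibniz rules for `[x, y]_q` push a letter
`f_{j,k+1}` through a level-`k` monomial at the cost of level-`k` monomials with one letter fewer;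
an induction on the level-`(k+1)` monomial then keeps both norms strictly decreasing.
-/

namespace BosonicExtension

section QCommutator

variable {K R : Type*} [CommRing K] [Ring R] [Algebra K R]

def qComm (c : K) (x y : R) : R := x * y - c • (y * x)

lemma qComm_mul_left (a b : K) (x y z : R) :
    qComm (a * b) (x * y) z = x * qComm b y z + b • (qComm a x z * y) := by
  simp only [qComm, mul_sub, sub_mul, mul_smul_comm, smul_mul_assoc, smul_sub, smul_smul,
    mul_assoc, mul_comm b a]
  abel

lemma qComm_mul_right (a b : K) (x y z : R) :
    qComm (a * b) x (y * z) = qComm a x y * z + a • (y * qComm b x z) := by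
  simp only [qComm, mul_sub, sub_mul, mul_smul_comm, smul_mul_assoc, smul_sub, smul_smul,
    mul_assoc]
  abel

lemma smul_mul_add_qComm (c : K) (x y : R) : c • (y * x) + qComm c x y = x * y :=
  add_sub_cancel _ _

lemma qComm_mem_of_mem_span {c : K} {S T : Set R} {P : Submodule K R}
    (h : ∀ x ∈ S, ∀ y ∈ T, qComm c x y ∈ P) {x y : R}
    (hx : x ∈ Submodule.span K S) (hy : y ∈ Submodule.span K T) : qComm c x y ∈ P := by
  let B : R →ₗ[K] R →ₗ[K] R := LinearMap.mul K R - c • (LinearMap.mul K R).flip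
  have hB : B x y ∈ Submodule.span K (Set.image2 (fun x y => B x y) S T) := by
    rw [← Submodule.map₂_span_span]
    exact Submodule.apply_mem_map₂ B hx hy
  refine Submodule.span_le.2 ?_ hB
  rintro _ ⟨x, hx, y, hy, rfl⟩
  exact h x hx y hy

lemma mulLeft_mem_of_mem_span (m : R) {S : Set R} {P : Submodule K R}
    (h : ∀ z ∈ S, m * z ∈ P) {x : R} (hx : x ∈ Submodule.span K S) : m * x ∈ P :=
  (Submodule.span_le (p := P.comap (LinearMap.mulLeft K m))).2 h hx

lemma mulRight_mem_of_mem_span (m : R) {S : Set R} {P : Submodule K R}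
    (h : ∀ z ∈ S, z * m ∈ P) {x : R} (hx : x ∈ Submodule.span K S) : x * m ∈ P :=
  (Submodule.span_le (p := P.comap (LinearMap.mulRight K m))).2 h hx

end QCommutator

section RootLattice

variable {ι : Type}

lemma qlt_iff_lt {γ' γ : ι →₀ ℤ} : qlt γ' γ ↔ γ' < γ := by
  rw [qlt, lt_iff_le_and_ne, Finsupp.le_def, and_comm]

def content (l : List ι) : ι →₀ ℤ := (l.map fun i => Finsupp.single i 1).sum

lemma content_cons (i : ι) (l : List ι) : content (i :: l) = Finsupp.single i 1 + content l := by
  simp [content]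

lemma content_nonneg (l : List ι) : 0 ≤ content l :=
  List.sum_nonneg fun _ h => by
    obtain ⟨i, -, rfl⟩ := List.mem_map.1 h
    simp

lemma single_one_pos (i : ι) : (0 : ι →₀ ℤ) < Finsupp.single i 1 := by
  rw [← Finsupp.single_zero i]
  exact lt_of_le_of_ne (Finsupp.single_le_single.2 zero_le_one)
    ((Finsupp.single_injective i).ne zero_ne_one)

lemma content_lt_content_cons (i : ι) (l : List ι) : content l < content (i :: l) := by
  rw [content_cons]
  exact lt_add_of_pos_left _ (single_one_pos i)

lemma nrm_add_le (γ δ : ι →₀ ℤ) : nrm (γ + δ) ≤ nrm γ + nrm δ :=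
  fun i => abs_add_le (γ i) (δ i)

lemma nrm_aim (i : ι) (m : ℤ) : nrm (aim i m) = Finsupp.single i 1 := by
  ext j
  rcases eq_or_ne i j with rfl | h <;> simp [nrm, aim, *, Int.abs_negOnePow]

lemma nrm_zsmul_of_nonneg (u : ℤˣ) {γ : ι →₀ ℤ} (hγ : 0 ≤ γ) : nrm ((u : ℤ) • γ) = γ := by
  ext i
  simp [nrm, abs_mul, Int.isUnit_iff_abs_eq.1 u.isUnit, abs_of_nonneg (hγ i)]

lemma ip_add_left (A : GCM ι) (β₁ β₂ γ : ι →₀ ℤ) :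
    ip A (β₁ + β₂) γ = ip A β₁ γ + ip A β₂ γ := by
  unfold ip
  rw [Finsupp.sum_add_index' (by simp) fun i a₁ a₂ => ?_]
  rw [← Finsupp.sum_add]
  simp only [add_mul]

lemma ip_add_right (A : GCM ι) (β γ₁ γ₂ : ι →₀ ℤ) :
    ip A β (γ₁ + γ₂) = ip A β γ₁ + ip A β γ₂ := by
  unfold ip
  rw [← Finsupp.sum_add]
  refine Finsupp.sum_congr fun i _ => ?_
  rw [Finsupp.sum_add_index' (by simp) fun j b₁ b₂ => by ring]

lemma ip_aim_aim (A : GCM ι) (i j : ι) (m n : ℤ) :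
    ip A (aim i m) (aim j n) = m.negOnePow * n.negOnePow * (A.d i * A.c i j) := by
  simp [ip, aim]

lemma aim_add_aim_succ (i : ι) (m : ℤ) : aim i m + aim i (m + 1) = 0 := by
  simp [aim, Int.negOnePow_succ]

def genWeight (l : List (ι × ℤ)) : ι →₀ ℤ := (l.map fun p => aim p.1 (p.2 + 1)).sum

def levelWeight (k : ℤ) (l : List ι) : ι →₀ ℤ := genWeight (l.map (·, k))

lemma levelWeight_cons (k : ℤ) (i : ι) (l : List ι) :
    levelWeight k (i :: l) = aim i (k + 1) + levelWeight k l := by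
  simp [levelWeight, genWeight]

lemma levelWeight_eq_zsmul_content (k : ℤ) (l : List ι) :
    levelWeight k l = ((k + 1).negOnePow : ℤ) • content l := by
  induction l with
  | nil => simp [levelWeight, genWeight, content]
  | cons i l ih => rw [levelWeight_cons, content_cons, ih, smul_add, aim, Finsupp.smul_single,
      smul_eq_mul, mul_one]

lemma nrm_levelWeight (k : ℤ) (l : List ι) : nrm (levelWeight k l) = content l := by
  rw [levelWeight_eq_zsmul_content, nrm_zsmul_of_nonneg _ (content_nonneg l)]

end RootLattice

section SerreElement

variable {ι : Type}

lemma map_serreIn {R S : Type} [Ring R] [Algebra 𝕂 R] [Ring S] [Algebra 𝕂 S] (φ : R →ₐ[𝕂] S)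
    (A : GCM ι) (i j : ι) (a b : R) :
    φ (serreIn A i j a b) = serreIn A i j (φ a) (φ b) := by
  simp [serreIn, map_sum, map_smul, map_mul, map_pow]

open AddMonoidAlgebra in
lemma serreIn_single {R : Type} [Ring R] [Algebra 𝕂 R] (A : GCM ι) (i j : ι) (g h : ι →₀ ℤ)
    (a b : R) :
    serreIn A i j (single g a) (single h b)
      = single ((1 - A.c i j).toNat • g + h) (serreIn A i j a b) := by
  unfold serreIn
  rw [← lsingle_apply (R := 𝕂) ((1 - A.c i j).toNat • g + h), map_sum]
  refine Finset.sum_congr rfl fun n hn => ?_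
  have hn : n ≤ (1 - A.c i j).toNat := Nat.lt_succ_iff.1 (Finset.mem_range.1 hn)
  rw [single_pow, single_pow, single_mul_single, single_mul_single, map_smul, lsingle_apply,
    smul_single, add_right_comm, ← add_smul, Nat.add_sub_cancel' hn, smul_single]

end SerreElement

lemma qh_ne_zero : qh ≠ 0 := pow_ne_zero _ RatFunc.X_ne_zero

lemma serreIn_ff (A : GCM I) {i j : I} (h : i ≠ j) (p : ℤ) :
    serreIn A i j (ff A i p) (ff A j p) = 0 := by
  simpa [map_serreIn, ff] using RingQuot.mkAlgHom_rel 𝕂 (hARel.serre (A := A) i j p h)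

lemma ff_mul_ff_of_lt (A : GCM I) (i j : I) {m p : ℤ} (h : m < p) :
    ff A i m * ff A j p
      = qh ^ (((p - m + 1).negOnePow : ℤ) * (A.d i * A.c i j)) • (ff A j p * ff A i m)
        + if j = i ∧ p = m + 1 then zi A i • 1 else 0 := by
  have h := RingQuot.mkAlgHom_rel 𝕂 (hARel.comm (A := A) i j m p h)
  simp only [map_mul, map_add, map_smul, apply_ite (RingQuot.mkAlgHom 𝕂 (hARel A)), map_one,
    map_zero] at h
  exact h

lemma qComm_ff_ff_succ (A : GCM I) (i j : I) (k : ℤ) :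
    qComm (qh ^ (-ip A (aim i (k + 1)) (aim j (k + 1 + 1)))) (ff A i k) (ff A j (k + 1))
      = if j = i then zi A i • 1 else 0 := by
  have hsign : ((k + 1).negOnePow : ℤ) * ((k + 1 + 1).negOnePow : ℤ) = -1 := by
    simp [Int.negOnePow_succ]
  rw [qComm, ff_mul_ff_of_lt A i j (lt_add_one k), ip_aim_aim, hsign]
  simp [Int.negOnePow_even 2 even_two]

def genMonomial (A : GCM I) (l : List (I × ℤ)) : hA A := (l.map fun p => ff A p.1 p.2).prod

lemma genMonomial_mem_hAwt (A : GCM I) (l : List (I × ℤ)) :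
    genMonomial A l ∈ hAwt A (genWeight l) :=
  Submodule.subset_span ⟨l, rfl, rfl⟩

lemma mul_mem_hAwt (A : GCM I) {γ δ : I →₀ ℤ} {x y : hA A} (hx : x ∈ hAwt A γ)
    (hy : y ∈ hAwt A δ) : x * y ∈ hAwt A (γ + δ) := by
  have hxy := Submodule.mul_mem_mul hx hy
  rw [hAwt, hAwt, Submodule.span_mul_span] at hxy
  refine Submodule.span_le.2 ?_ hxy
  rintro _ ⟨_, ⟨l₁, rfl, rfl⟩, _, ⟨l₂, rfl, rfl⟩, rfl⟩
  have h := genMonomial_mem_hAwt A (l₁ ++ l₂)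
  rwa [genMonomial, genWeight, List.map_append, List.map_append, List.prod_append,
    List.sum_append] at h

lemma ff_mem_hAk (A : GCM I) (i : I) (p : ℤ) : ff A i p ∈ hAk A p :=
  Algebra.subset_adjoin ⟨i, p, le_rfl, le_rfl, rfl⟩

lemma ff_mem_hAwt (A : GCM I) (i : I) (p : ℤ) : ff A i p ∈ hAwt A (aim i (p + 1)) :=
  Submodule.subset_span ⟨[(i, p)], by simp [aim], by simp⟩

def levelMonomial (A : GCM I) (k : ℤ) (l : List I) : hA A := genMonomial A (l.map (·, k))

lemma levelMonomial_cons (A : GCM I) (k : ℤ) (i : I) (l : List I) :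
    levelMonomial A k (i :: l) = ff A i k * levelMonomial A k l := by
  simp [levelMonomial, genMonomial]

lemma levelMonomial_append (A : GCM I) (k : ℤ) (l₁ l₂ : List I) :
    levelMonomial A k (l₁ ++ l₂) = levelMonomial A k l₁ * levelMonomial A k l₂ := by
  simp [levelMonomial, genMonomial]

lemma levelMonomial_mem_hAk (A : GCM I) (k : ℤ) (l : List I) : levelMonomial A k l ∈ hAk A k := by
  induction l with
  | nil => exact one_mem _
  | cons i l ih =>
    rw [levelMonomial_cons]
    exact mul_mem (ff_mem_hAk A i k) ih

lemma levelMonomial_mem_hAwt (A : GCM I) (k : ℤ) (l : List I) :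
    levelMonomial A k l ∈ hAwt A (levelWeight k l) :=
  genMonomial_mem_hAwt A _

section Grading

open AddMonoidAlgebra

def gradingFree (A : GCM I) : FreeAlgebra 𝕂 (I × ℤ) →ₐ[𝕂] AddMonoidAlgebra (hA A) (I →₀ ℤ) :=
  FreeAlgebra.lift 𝕂 fun p => single (aim p.1 (p.2 + 1)) (ff A p.1 p.2)

lemma gradingFree_ι (A : GCM I) (p : I × ℤ) :
    gradingFree A (FreeAlgebra.ι 𝕂 p) = single (aim p.1 (p.2 + 1)) (ff A p.1 p.2) :=
  FreeAlgebra.lift_ι_apply _ _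

lemma gradingFree_rel (A : GCM I) ⦃x y : FreeAlgebra 𝕂 (I × ℤ)⦄ (h : hARel A x y) :
    gradingFree A x = gradingFree A y := by
  cases h with
  | serre i j p h =>
    refine (map_serreIn (R := FreeAlgebra 𝕂 (I × ℤ)) (S := AddMonoidAlgebra (hA A) (I →₀ ℤ))
      (gradingFree A) A i j _ _).trans ?_
    rw [map_zero, gradingFree_ι, gradingFree_ι, serreIn_single, serreIn_ff A h, single_zero]
  | comm i j m p h =>
    -- the constant term only occurs for `f_{i,m} f_{i,m+1}`, whose weights cancel
    have hconst : (if j = i ∧ p = m + 1 then ((1 : 𝕂) - qd A i ^ 2) • 1 else 0)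
        = single (aim i (m + 1) + aim j (p + 1))
            (if j = i ∧ p = m + 1 then zi A i • (1 : hA A) else 0) := by
      split_ifs with hc
      · obtain ⟨rfl, rfl⟩ := hc
        rw [aim_add_aim_succ, one_def, smul_single]
        rfl
      · rw [single_zero]
    rw [map_mul, map_add, map_smul, map_mul, apply_ite (gradingFree A), map_smul, map_one,
      map_zero, hconst, gradingFree_ι, gradingFree_ι, single_mul_single, single_mul_single,
      smul_single, add_comm (aim j _), ← single_add, ← ff_mul_ff_of_lt A i j h]

def grading (A : GCM I) : hA A →ₐ[𝕂] AddMonoidAlgebra (hA A) (I →₀ ℤ) :=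
  RingQuot.liftAlgHom 𝕂 ⟨gradingFree A, gradingFree_rel A⟩

lemma grading_ff (A : GCM I) (i : I) (p : ℤ) :
    grading A (ff A i p) = single (aim i (p + 1)) (ff A i p) := by
  rw [grading, ff, RingQuot.liftAlgHom_mkAlgHom_apply]
  exact gradingFree_ι A (i, p)

lemma grading_genMonomial (A : GCM I) (l : List (I × ℤ)) :
    grading A (genMonomial A l) = single (genWeight l) (genMonomial A l) := by
  induction l with
  | nil => rw [genMonomial, List.map_nil, List.prod_nil, map_one]; rfl
  | cons p l ih =>
    simp only [genMonomial, genWeight, List.map_cons, List.prod_cons, List.sum_cons,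
      map_mul] at ih ⊢
    rw [ih, grading_ff, single_mul_single]

lemma grading_of_mem_hAwt (A : GCM I) {γ : I →₀ ℤ} {x : hA A} (hx : x ∈ hAwt A γ) :
    grading A x = single γ x := by
  refine (Submodule.span_le (p := LinearMap.eqLocus (grading A).toLinearMap
    (lsingle (R := 𝕂) γ))).2 ?_ hx
  rintro _ ⟨l, rfl, rfl⟩
  exact grading_genMonomial A l

end Grading

lemma mem_span_levelMonomial_of_mem_hAk (A : GCM I) {k : ℤ} {x : hA A} (hx : x ∈ hAk A k) :
    x ∈ Submodule.span 𝕂 (Set.range (levelMonomial A k)) := by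
  rw [← Subalgebra.mem_toSubmodule, hAk, hAband, Algebra.adjoin_eq_span] at hx
  refine Submodule.span_mono (fun m hm => ?_) hx
  induction hm using Submonoid.closure_induction with
  | mem _ h =>
    obtain ⟨i, k', h₁, h₂, rfl⟩ := h
    exact ⟨[i], by simp [levelMonomial, genMonomial, le_antisymm h₂ h₁]⟩
  | one => exact ⟨[], rfl⟩
  | mul _ _ _ _ h₁ h₂ =>
    obtain ⟨l₁, rfl⟩ := h₁
    obtain ⟨l₂, rfl⟩ := h₂
    exact ⟨l₁ ++ l₂, levelMonomial_append A k l₁ l₂⟩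

def levelSpan (A : GCM I) (k : ℤ) (γ : I →₀ ℤ) : Submodule 𝕂 (hA A) :=
  Submodule.span 𝕂 (levelMonomial A k '' {l | levelWeight k l = γ})

lemma mem_levelSpan (A : GCM I) {k : ℤ} {γ : I →₀ ℤ} {x : hA A} (hx₁ : x ∈ hAk A k)
    (hx₂ : x ∈ hAwt A γ) : x ∈ levelSpan A k γ := by
  let π : hA A →ₗ[𝕂] hA A := Finsupp.lapply γ ∘ₗ
    (AddMonoidAlgebra.coeffLinearEquiv 𝕂).toLinearMap ∘ₗ (grading A).toLinearMap
  have hπx : π x = x := by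
    simp [π, grading_of_mem_hAwt A hx₂, AddMonoidAlgebra.coeffLinearEquiv]
  have hπ : Submodule.map π (Submodule.span 𝕂 (Set.range (levelMonomial A k)))
      ≤ levelSpan A k γ := by
    refine (Submodule.map_span_le _ _ _).2 ?_
    rintro _ ⟨l, rfl⟩
    have hπl : π (levelMonomial A k l)
        = Finsupp.single (levelWeight k l) (levelMonomial A k l) γ := by
      simp [π, levelMonomial, levelWeight, grading_genMonomial]
    rw [hπl, Finsupp.single_apply]
    split_ifs with h
    · exact Submodule.subset_span ⟨l, h, rfl⟩
    · exact zero_mem _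
  exact hπx ▸ hπ (Submodule.mem_map_of_mem (mem_span_levelMonomial_of_mem_hAk A hx₁))

def levelSpanBelow (A : GCM I) (k : ℤ) (a : I →₀ ℤ) : Submodule 𝕂 (hA A) :=
  Submodule.span 𝕂 (levelMonomial A k '' {l | content l < a})

lemma qComm_levelMonomial_ff_mem_levelSpanBelow (A : GCM I) (k : ℤ) (j : I) (l : List I) :
    qComm (qh ^ (-ip A (levelWeight k l) (aim j (k + 1 + 1)))) (levelMonomial A k l)
      (ff A j (k + 1)) ∈ levelSpanBelow A k (content l) := by
  induction l with
  | nil => simp [qComm, levelWeight, genWeight, ip, levelMonomial, genMonomial]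
  | cons i l ih =>
    rw [levelWeight_cons, ip_add_left, neg_add, zpow_add₀ qh_ne_zero, levelMonomial_cons,
      qComm_mul_left, qComm_ff_ff_succ]
    refine add_mem (mulLeft_mem_of_mem_span _ ?_ ih) (Submodule.smul_mem _ _ ?_)
    · rintro _ ⟨l', hl', rfl⟩
      rw [← levelMonomial_cons]
      refine Submodule.subset_span ⟨i :: l', ?_, rfl⟩
      rw [Set.mem_ofPred_eq, content_cons, content_cons]
      exact add_lt_add_right hl' _
    · split_ifs
      · rw [smul_mul_assoc, one_mul]
        exact Submodule.smul_mem _ _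
          (Submodule.subset_span ⟨l, content_lt_content_cons i l, rfl⟩)
      · rw [zero_mul]
        exact zero_mem _

def productSpanBelow (A : GCM I) (k : ℤ) (a b : I →₀ ℤ) : Submodule 𝕂 (hA A) :=
  Submodule.span 𝕂 {z | ∃ (α' β' : I →₀ ℤ) (u v : hA A), nrm α' < a ∧ nrm β' < b ∧
    u ∈ hAk A (k + 1) ∧ u ∈ hAwt A β' ∧ v ∈ hAk A k ∧ v ∈ hAwt A α' ∧ z = u * v}

lemma mul_mem_productSpanBelow (A : GCM I) (k : ℤ) {a b α' β' : I →₀ ℤ} {u v : hA A}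
    (hα' : nrm α' < a) (hβ' : nrm β' < b) (hu₁ : u ∈ hAk A (k + 1)) (hu₂ : u ∈ hAwt A β')
    (hv₁ : v ∈ hAk A k) (hv₂ : v ∈ hAwt A α') : u * v ∈ productSpanBelow A k a b :=
  Submodule.subset_span ⟨α', β', u, v, hα', hβ', hu₁, hu₂, hv₁, hv₂, rfl⟩

lemma productSpanBelow_mono (A : GCM I) (k : ℤ) {a a' b b' : I →₀ ℤ} (ha : a ≤ a') (hb : b ≤ b') :
    productSpanBelow A k a b ≤ productSpanBelow A k a' b' := by
  refine Submodule.span_mono ?_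
  rintro _ ⟨α', β', u, v, hα', hβ', hu₁, hu₂, hv₁, hv₂, rfl⟩
  exact ⟨α', β', u, v, hα'.trans_le ha, hβ'.trans_le hb, hu₁, hu₂, hv₁, hv₂, rfl⟩

lemma ff_mul_mem_productSpanBelow (A : GCM I) (k : ℤ) (j : I) {a b : I →₀ ℤ} {z : hA A}
    (hz : z ∈ productSpanBelow A k a b) :
    ff A j (k + 1) * z ∈ productSpanBelow A k a (Finsupp.single j 1 + b) := by
  refine mulLeft_mem_of_mem_span _ ?_ hz
  rintro _ ⟨α', β', u, v, hα', hβ', hu₁, hu₂, hv₁, hv₂, rfl⟩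
  rw [← mul_assoc]
  have hβ'' : nrm (aim j (k + 1 + 1) + β') < Finsupp.single j 1 + b :=
    (nrm_add_le _ _).trans_lt (by rw [nrm_aim]; exact add_lt_add_right hβ' _)
  exact mul_mem_productSpanBelow A k hα' hβ'' (mul_mem (ff_mem_hAk A j _) hu₁)
    (mul_mem_hAwt A (ff_mem_hAwt A j _) hu₂) hv₁ hv₂

lemma levelMonomial_mul_mem_productSpanBelow (A : GCM I) (k : ℤ) {a b : I →₀ ℤ} {l₁ l₂ : List I}
    (h₁ : content l₁ < a) (h₂ : content l₂ < b) :
    levelMonomial A (k + 1) l₂ * levelMonomial A k l₁ ∈ productSpanBelow A k a b :=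
  mul_mem_productSpanBelow A k (by rwa [nrm_levelWeight]) (by rwa [nrm_levelWeight])
    (levelMonomial_mem_hAk A _ l₂) (levelMonomial_mem_hAwt A _ l₂)
    (levelMonomial_mem_hAk A k l₁) (levelMonomial_mem_hAwt A k l₁)

lemma qComm_levelMonomial_mem_productSpanBelow (A : GCM I) (k : ℤ) (l₂ : List I) :
    ∀ l₁ : List I, qComm (qh ^ (-ip A (levelWeight k l₁) (levelWeight (k + 1) l₂)))
      (levelMonomial A k l₁) (levelMonomial A (k + 1) l₂)
      ∈ productSpanBelow A k (content l₁) (content l₂) := by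
  induction l₂ with
  | nil => intro l₁; simp [qComm, levelWeight, genWeight, ip, levelMonomial, genMonomial]
  | cons j l₂ ih =>
    intro l₁
    rw [levelWeight_cons, ip_add_right, neg_add, zpow_add₀ qh_ne_zero, levelMonomial_cons,
      qComm_mul_right, content_cons]
    refine add_mem ?_ (Submodule.smul_mem _ _ (ff_mul_mem_productSpanBelow A k j (ih l₁)))
    refine mulRight_mem_of_mem_span _ ?_ (qComm_levelMonomial_ff_mem_levelSpanBelow A k j l₁)
    rintro _ ⟨l, hl, rfl⟩
    have hl₂ : content l₂ < Finsupp.single j 1 + content l₂ := by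
      simpa only [content_cons] using content_lt_content_cons j l₂
    rw [← smul_mul_add_qComm (qh ^ (-ip A (levelWeight k l) (levelWeight (k + 1) l₂)))]
    exact add_mem (Submodule.smul_mem _ _ (levelMonomial_mul_mem_productSpanBelow A k hl hl₂))
      (productSpanBelow_mono A k hl.le hl₂.le (ih l))

lemma qComm_mem_productSpanBelow (A : GCM I) {k : ℤ} {α β : I →₀ ℤ} {x y : hA A}
    (hx₁ : x ∈ hAk A k) (hx₂ : x ∈ hAwt A α) (hy₁ : y ∈ hAk A (k + 1)) (hy₂ : y ∈ hAwt A β) :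
    qComm (qh ^ (-ip A α β)) x y ∈ productSpanBelow A k (nrm α) (nrm β) := by
  refine qComm_mem_of_mem_span ?_ (mem_levelSpan A hx₁ hx₂) (mem_levelSpan A hy₁ hy₂)
  rintro _ ⟨l₁, rfl, rfl⟩ _ ⟨l₂, rfl, rfl⟩
  simpa only [nrm_levelWeight] using qComm_levelMonomial_mem_productSpanBelow A k l₂ l₁

end BosonicExtension

/-- for homogeneous `x ∈ Â[k]_α` and `y ∈ Â[k+1]_β`, the `q`-commutator
`[x,y]_q = xy - q^{-(α,β)} yx` lies in the span of the products `u v` with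
`u ∈ Â[k+1]_{β'}`, `v ∈ Â[k]_{α'}`, `‖α'‖ < ‖α‖` and `‖β'‖ < ‖β‖`. -/
theorem statement19 (A : GCM I) (k : ℤ) (α β : I →₀ ℤ) (x y : hA A)
    (hx1 : x ∈ hAk A k) (hx2 : x ∈ hAwt A α)
    (hy1 : y ∈ hAk A (k + 1)) (hy2 : y ∈ hAwt A β) :
    x * y - qh ^ (-(ip A α β)) • (y * x) ∈
      Submodule.span 𝕂 {z : hA A | ∃ (α' β' : I →₀ ℤ) (u v : hA A),
        qlt (nrm α') (nrm α) ∧ qlt (nrm β') (nrm β) ∧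
        u ∈ hAk A (k + 1) ∧ u ∈ hAwt A β' ∧ v ∈ hAk A k ∧ v ∈ hAwt A α' ∧
        z = u * v} := by
  simpa only [BosonicExtension.productSpanBelow, BosonicExtension.qComm,
    BosonicExtension.qlt_iff_lt] using BosonicExtension.qComm_mem_productSpanBelow A hx1 hx2 hy1 hy2

end
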